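/- For every ε > 0, the function w_ε(r) = P^{(α-2m+1)/(4m)} ( ε/(ε²+r²) )^{(α-2m+1)/2} solves (-Δ_α)^m w_ε = w_ε^{(α+2m+1)/(α-2m+1)} on (0,∞). -/

import Mathlib

/-- The α-generalized radial Laplacian: Δ_α v(r) = v''(r) + (α/r) v'(r). -/
noncomputable def lapl (α : ℝ) (v : ℝ → ℝ) : ℝ → ℝ :=
  fun r => deriv (deriv v) r + (α / r) * deriv v r

/-- The m-fold iterate of -Δ_α. -/
noncomputable def negLaplIter (α : ℝ) (m : ℕ) : (ℝ → ℝ) → (ℝ → ℝ) :=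
  (fun v r => -(lapl α v r))^[m]

set_option linter.unusedVariables false


open Finset

/-- Combinatorial coefficient `2^(k-i) * (k choose i) * (m-k)(m-k+1)⋯(m-i-1)`. -/
noncomputable def Dcoef (m k i : ℕ) : ℝ :=
  2 ^ (k - i) * (k.choose i : ℝ) * ∏ t ∈ Finset.range (k - i), ((m : ℝ) - k + t)

/-- Partial product `∏_{h<j} (α+1+2(h-m))`. -/
noncomputable def Qcoef (α : ℝ) (m : ℕ) (j : ℕ) : ℝ :=
  ∏ h ∈ Finset.range j, (α + 1 + 2 * ((h : ℝ) - m))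

noncomputable def Ccoef (α : ℝ) (m k i : ℕ) : ℝ := Dcoef m k i * Qcoef α m (k + i)

lemma Dcoef_of_lt {k i : ℕ} (h : k < i) (m : ℕ) : Dcoef m k i = 0 := by
  simp [Dcoef, Nat.choose_eq_zero_of_lt h]

lemma Dcoef_self (m k : ℕ) : Dcoef m k k = 1 := by
  simp [Dcoef, Nat.sub_self]

lemma choose_cast_id (k i : ℕ) :
    (k.choose (i + 1) : ℝ) * (i + 1) = (k.choose i : ℝ) * ((k : ℝ) - i) := by
  rcases lt_or_ge i k with h | h
  · have := Nat.choose_succ_right_eq k i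
    have hcast : ((k.choose (i + 1) * (i + 1) : ℕ) : ℝ) = ((k.choose i * (k - i) : ℕ) : ℝ) := by
      exact_mod_cast congrArg (Nat.cast (R := ℝ)) this
    push_cast [Nat.cast_sub h.le] at hcast
    linarith [hcast]
  · rcases eq_or_lt_of_le h with rfl | h'
    · simp [Nat.choose_eq_zero_of_lt (Nat.lt_succ_self _)]
    · rw [Nat.choose_eq_zero_of_lt h', Nat.choose_eq_zero_of_lt (by omega)]
      simp

lemma Dcoef_rec_zero (m k : ℕ) :
    Dcoef m (k + 1) 0 = 2 * ((m : ℝ) - 1 - k) * Dcoef m k 0 := by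
  simp only [Dcoef, Nat.sub_zero, Nat.choose_zero_right]
  rw [Finset.prod_range_succ']
  have h : ∀ t ∈ Finset.range k, ((m : ℝ) - (k + 1 : ℕ) + ((t + 1 : ℕ) : ℝ)) = (m : ℝ) - k + t := by
    intro t _; push_cast; ring
  rw [Finset.prod_congr rfl h]
  push_cast
  ring

lemma Dcoef_rec (m k i : ℕ) :
    Dcoef m (k + 1) (i + 1)
      = 2 * ((m : ℝ) - 1 - k - (i + 1)) * Dcoef m k (i + 1) + Dcoef m k i := by
  rcases lt_or_ge i k with h | h
  · -- k = i + 1 + l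
    obtain ⟨l, rfl⟩ : ∃ l, k = i + 1 + l := ⟨k - i - 1, by omega⟩
    have e1 : i + 1 + l + 1 - (i + 1) = l + 1 := by omega
    have e2 : i + 1 + l - (i + 1) = l := by omega
    have e3 : i + 1 + l - i = l + 1 := by omega
    simp only [Dcoef, e1, e2, e3]
    rw [Finset.prod_range_succ' (fun t => ((m : ℝ) - (i + 1 + l + 1 : ℕ) + t)) l]
    have hc : ∀ t ∈ Finset.range l,
        ((m : ℝ) - ((i + 1 + l + 1 : ℕ) : ℝ) + ((t + 1 : ℕ) : ℝ))
          = (m : ℝ) - ((i + 1 + l : ℕ) : ℝ) + t := by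
      intro t _; push_cast; ring
    rw [Finset.prod_congr rfl hc]
    rw [Finset.prod_range_succ (fun t => ((m : ℝ) - (i + 1 + l : ℕ) + t)) l]
    have hPascal : (((i + 1 + l + 1).choose (i + 1) : ℕ) : ℝ)
        = ((i + 1 + l).choose i : ℝ) + ((i + 1 + l).choose (i + 1) : ℝ) := by
      exact_mod_cast congrArg (Nat.cast (R := ℝ)) (Nat.choose_succ_succ (i + 1 + l) i)
    have hid := choose_cast_id (i + 1 + l) i
    set B : ℝ := ∏ t ∈ Finset.range l, ((m : ℝ) - ((i + 1 + l : ℕ) : ℝ) + t) with hB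
    push_cast at hPascal hid ⊢
    linear_combination (2 ^ (l + 1) * B * ((m : ℝ) - i - l - 2)) * hPascal
      + (2 ^ (l + 1) * B) * hid
  · rcases eq_or_lt_of_le h with rfl | h'
    · rw [Dcoef_self, Dcoef_self, Dcoef_of_lt (Nat.lt_succ_self _)]
      ring
    · rw [Dcoef_of_lt (by omega), Dcoef_of_lt (by omega), Dcoef_of_lt h']
      ring
lemma Qcoef_succ (α : ℝ) (m j : ℕ) :
    Qcoef α m (j + 1) = Qcoef α m j * (α + 1 + 2 * ((j : ℝ) - m)) :=
  Finset.prod_range_succ _ _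

lemma Ccoef_rec_zero (α : ℝ) (m k : ℕ) :
    Ccoef α m (k + 1) 0
      = (2 * ((m : ℝ) - 1 - k) * (α + 1 + 2 * ((k : ℝ) - m))) * Ccoef α m k 0 := by
  simp only [Ccoef, Nat.add_zero, Qcoef_succ, Dcoef_rec_zero]
  ring

lemma Ccoef_rec (α : ℝ) (m k i : ℕ) :
    Ccoef α m (k + 1) (i + 1)
      = (2 * ((m : ℝ) - 1 - k - (i + 1)) * (α + 1 + 2 * (((k : ℝ) + i + 1) - m))) *
          Ccoef α m k (i + 1)
        + ((α + 1 + 2 * (((k : ℝ) + i) - m)) * (α + 1 + 2 * (((k : ℝ) + i + 1) - m))) *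
          Ccoef α m k i := by
  have h1 : (k + 1) + (i + 1) = (k + i) + 2 := by omega
  have h2 : k + (i + 1) = (k + i) + 1 := by omega
  simp only [Ccoef, h1, h2, Qcoef_succ, Dcoef_rec]
  push_cast
  ring

lemma Ccoef_diag (α : ℝ) (m k : ℕ) : Ccoef α m k k = Qcoef α m (k + k) := by
  simp [Ccoef, Dcoef_self]

lemma Ccoef_top_vanish (α : ℝ) (m : ℕ) {i : ℕ} (h : i < m) : Ccoef α m m i = 0 := by
  have : Dcoef m m i = 0 := by
    have h0 : (0 : ℕ) ∈ Finset.range (m - i) := Finset.mem_range.mpr (by omega)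
    simp only [Dcoef]
    rw [Finset.prod_eq_zero h0 (by simp)]
    ring
  simp [Ccoef, this]


lemma negLaplIter_succ (α : ℝ) (k : ℕ) (f : ℝ → ℝ) (r : ℝ) :
    negLaplIter α (k + 1) f r = -(lapl α (negLaplIter α k f) r) := by
  simp only [negLaplIter, Function.iterate_succ_apply']

lemma negLaplIter_zero (α : ℝ) (f : ℝ → ℝ) : negLaplIter α 0 f = f := rfl

lemma lapl_const_mul (α c : ℝ) (g : ℝ → ℝ) :
    lapl α (fun x => c * g x) = fun x => c * lapl α g x := by
  funext x
  simp only [lapl, deriv_const_mul_field']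
  ring

lemma negLaplIter_const_mul (α c : ℝ) (g : ℝ → ℝ) (k : ℕ) :
    negLaplIter α k (fun x => c * g x) = fun x => c * negLaplIter α k g x := by
  induction k with
  | zero => rfl
  | succ n ih =>
    funext r
    rw [negLaplIter_succ, ih, lapl_const_mul]
    have : negLaplIter α (n + 1) g r = -(lapl α (negLaplIter α n g) r) :=
      negLaplIter_succ α n g r
    rw [this]; ring

lemma hasDerivAt_base (ε x : ℝ) : HasDerivAt (fun x : ℝ => ε ^ 2 + x ^ 2) (2 * x) x := by
  simpa using (hasDerivAt_pow 2 x).const_add (ε ^ 2)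

lemma hasDerivAt_term (ε : ℝ) (hε : ε ≠ 0) (c p x : ℝ) :
    HasDerivAt (fun x => c * (ε ^ 2 + x ^ 2) ^ p)
      (c * (p * (ε ^ 2 + x ^ 2) ^ (p - 1) * (2 * x))) x := by
  have hne : ε ^ 2 + x ^ 2 ≠ 0 := by positivity
  have h := ((hasDerivAt_base ε x).rpow_const (p := p) (Or.inl hne)).const_mul c
  exact h.congr_deriv (by ring)

lemma lapl_sum_rpow (α ε : ℝ) (hε : ε ≠ 0) (n : ℕ) (c p : ℕ → ℝ) {r : ℝ} (hr : r ≠ 0) :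
    lapl α (fun x => ∑ i ∈ Finset.range n, c i * (ε ^ 2 + x ^ 2) ^ (p i)) r
      = ∑ i ∈ Finset.range n,
          c i * (2 * p i * (α + 2 * p i - 1) * (ε ^ 2 + r ^ 2) ^ (p i - 1)
            - 4 * p i * (p i - 1) * ε ^ 2 * (ε ^ 2 + r ^ 2) ^ (p i - 2)) := by
  have hpos : ∀ x : ℝ, (0 : ℝ) < ε ^ 2 + x ^ 2 := fun x => by positivity
  have D1 : ∀ x : ℝ, HasDerivAt (fun x => ∑ i ∈ Finset.range n, c i * (ε ^ 2 + x ^ 2) ^ (p i))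
      (∑ i ∈ Finset.range n, c i * (p i * (ε ^ 2 + x ^ 2) ^ (p i - 1) * (2 * x))) x := by
    intro x
    exact HasDerivAt.fun_sum fun i _ => hasDerivAt_term ε hε (c i) (p i) x
  have hd1 : deriv (fun x => ∑ i ∈ Finset.range n, c i * (ε ^ 2 + x ^ 2) ^ (p i))
      = fun x => ∑ i ∈ Finset.range n, c i * (p i * (ε ^ 2 + x ^ 2) ^ (p i - 1) * (2 * x)) :=
    funext fun x => (D1 x).deriv
  have D2 : HasDerivAt
      (fun x => ∑ i ∈ Finset.range n, c i * (p i * (ε ^ 2 + x ^ 2) ^ (p i - 1) * (2 * x)))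
      (∑ i ∈ Finset.range n,
        c i * ((p i * ((p i - 1) * (ε ^ 2 + r ^ 2) ^ (p i - 1 - 1) * (2 * r))) * (2 * r)
          + p i * (ε ^ 2 + r ^ 2) ^ (p i - 1) * 2)) r := by
    refine HasDerivAt.fun_sum fun i _ => ?_
    have hA : HasDerivAt (fun x => p i * (ε ^ 2 + x ^ 2) ^ (p i - 1))
        (p i * ((p i - 1) * (ε ^ 2 + r ^ 2) ^ (p i - 1 - 1) * (2 * r))) r := by
      have hne : ε ^ 2 + r ^ 2 ≠ 0 := by positivity
      have h := ((hasDerivAt_base ε r).rpow_const (p := p i - 1) (Or.inl hne)).const_mul (p i)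
      exact h.congr_deriv (by ring)
    have hB : HasDerivAt (fun x : ℝ => 2 * x) 2 r := by
      simpa using (hasDerivAt_id r).const_mul 2
    have := (hA.mul hB).const_mul (c i)
    simpa [mul_assoc] using this
  simp only [lapl, hd1, D2.deriv]
  rw [Finset.mul_sum, ← Finset.sum_add_distrib]
  refine Finset.sum_congr rfl fun i _ => ?_
  have hG : (0 : ℝ) < ε ^ 2 + r ^ 2 := hpos r
  have h1 : (ε ^ 2 + r ^ 2) ^ (p i - 1) = (ε ^ 2 + r ^ 2) ^ (p i - 2) * (ε ^ 2 + r ^ 2) := by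
    rw [show p i - 1 = (p i - 2) + 1 by ring, Real.rpow_add_one hG.ne']
  have h2 : p i - 1 - 1 = p i - 2 := by ring
  rw [h2, h1]
  field_simp
  ring

noncomputable def uterm (α : ℝ) (m : ℕ) (ε r : ℝ) (k i : ℕ) : ℝ :=
  2 * ((m : ℝ) - 1 - k - i) * (α + 1 + 2 * ((k : ℝ) + i - m)) * (Ccoef α m k i * (ε ^ 2) ^ i) *
    (ε ^ 2 + r ^ 2) ^ (-((α - 2 * (m : ℝ) + 1) / 2) - ((k : ℝ) + 1) - (i : ℝ))

noncomputable def vterm (α : ℝ) (m : ℕ) (ε r : ℝ) (k i : ℕ) : ℝ :=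
  (α + 1 + 2 * ((k : ℝ) + i - m)) * (α + 1 + 2 * ((k : ℝ) + i + 1 - m)) *
    (Ccoef α m k i * (ε ^ 2) ^ (i + 1)) *
    (ε ^ 2 + r ^ 2) ^ (-((α - 2 * (m : ℝ) + 1) / 2) - ((k : ℝ) + 1) - ((i : ℝ) + 1))

lemma body_split (α : ℝ) (m : ℕ) (ε r : ℝ) (k i : ℕ) :
    -((Ccoef α m k i * (ε ^ 2) ^ i) *
        (2 * (-((α - 2 * (m : ℝ) + 1) / 2) - (k : ℝ) - (i : ℝ)) *
            (α + 2 * (-((α - 2 * (m : ℝ) + 1) / 2) - (k : ℝ) - (i : ℝ)) - 1) *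
            (ε ^ 2 + r ^ 2) ^ ((-((α - 2 * (m : ℝ) + 1) / 2) - (k : ℝ) - (i : ℝ)) - 1)
          - 4 * (-((α - 2 * (m : ℝ) + 1) / 2) - (k : ℝ) - (i : ℝ)) *
            ((-((α - 2 * (m : ℝ) + 1) / 2) - (k : ℝ) - (i : ℝ)) - 1) * ε ^ 2 *
            (ε ^ 2 + r ^ 2) ^ ((-((α - 2 * (m : ℝ) + 1) / 2) - (k : ℝ) - (i : ℝ)) - 2)))
      = uterm α m ε r k i + vterm α m ε r k i := by
  have h1 : (-((α - 2 * (m : ℝ) + 1) / 2) - (k : ℝ) - (i : ℝ)) - 1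
      = -((α - 2 * (m : ℝ) + 1) / 2) - ((k : ℝ) + 1) - (i : ℝ) := by ring
  have h2 : (-((α - 2 * (m : ℝ) + 1) / 2) - (k : ℝ) - (i : ℝ)) - 2
      = -((α - 2 * (m : ℝ) + 1) / 2) - ((k : ℝ) + 1) - ((i : ℝ) + 1) := by ring
  rw [h1, h2]
  unfold uterm vterm
  ring

lemma G_succ_eq (α : ℝ) (m : ℕ) (ε r : ℝ) (k i : ℕ) :
    Ccoef α m (k + 1) (i + 1) * (ε ^ 2) ^ (i + 1) *
        (ε ^ 2 + r ^ 2) ^ (-((α - 2 * (m : ℝ) + 1) / 2) - ((k : ℝ) + 1) - ((i : ℝ) + 1))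
      = uterm α m ε r k (i + 1) + vterm α m ε r k i := by
  rw [Ccoef_rec]
  unfold uterm vterm
  push_cast
  ring

lemma G_zero_eq (α : ℝ) (m : ℕ) (ε r : ℝ) (k : ℕ) :
    Ccoef α m (k + 1) 0 * (ε ^ 2) ^ (0 : ℕ) *
        (ε ^ 2 + r ^ 2) ^ (-((α - 2 * (m : ℝ) + 1) / 2) - ((k : ℝ) + 1) - ((0 : ℕ) : ℝ))
      = uterm α m ε r k 0 := by
  rw [Ccoef_rec_zero]
  unfold uterm
  push_cast
  ring

lemma uterm_top (α : ℝ) (m : ℕ) (ε r : ℝ) (k : ℕ) : uterm α m ε r k (k + 1) = 0 := by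
  unfold uterm
  rw [show Ccoef α m k (k + 1) = 0 by simp [Ccoef, Dcoef_of_lt (Nat.lt_succ_self k)]]
  ring

lemma main_sum (α : ℝ) (m : ℕ) (ε : ℝ) (hε : 0 < ε) (k : ℕ) :
    ∀ r : ℝ, 0 < r →
      negLaplIter α k (fun x => (ε ^ 2 + x ^ 2) ^ (-((α - 2 * (m : ℝ) + 1) / 2))) r
        = ∑ i ∈ Finset.range (k + 1),
            Ccoef α m k i * (ε ^ 2) ^ i *
              (ε ^ 2 + r ^ 2) ^ (-((α - 2 * (m : ℝ) + 1) / 2) - (k : ℝ) - (i : ℝ)) := by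
  induction k with
  | zero =>
    intro r hr
    simp [negLaplIter_zero, Ccoef, Dcoef, Qcoef]
  | succ k ih =>
    intro r hr
    have heq : negLaplIter α k (fun x => (ε ^ 2 + x ^ 2) ^ (-((α - 2 * (m : ℝ) + 1) / 2)))
        =ᶠ[nhds r] (fun x => ∑ i ∈ Finset.range (k + 1),
            (Ccoef α m k i * (ε ^ 2) ^ i) *
              (ε ^ 2 + x ^ 2) ^ (-((α - 2 * (m : ℝ) + 1) / 2) - (k : ℝ) - (i : ℝ))) := by
      refine Filter.eventuallyEq_of_mem (Ioi_mem_nhds hr) fun x hx => ?_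
      have := ih x hx
      simpa [mul_assoc] using this
    have hlapl : lapl α (negLaplIter α k (fun x => (ε ^ 2 + x ^ 2) ^ (-((α - 2 * (m : ℝ) + 1) / 2)))) r
        = lapl α (fun x => ∑ i ∈ Finset.range (k + 1),
            (Ccoef α m k i * (ε ^ 2) ^ i) *
              (ε ^ 2 + x ^ 2) ^ (-((α - 2 * (m : ℝ) + 1) / 2) - (k : ℝ) - (i : ℝ))) r := by
      simp only [lapl]
      rw [Filter.EventuallyEq.deriv_eq heq, Filter.EventuallyEq.deriv_eq heq.deriv]
    have hstep : lapl α (fun x => ∑ i ∈ Finset.range (k + 1),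
            (Ccoef α m k i * (ε ^ 2) ^ i) *
              (ε ^ 2 + x ^ 2) ^ (-((α - 2 * (m : ℝ) + 1) / 2) - (k : ℝ) - (i : ℝ))) r
        = ∑ i ∈ Finset.range (k + 1),
            (Ccoef α m k i * (ε ^ 2) ^ i) *
              (2 * (-((α - 2 * (m : ℝ) + 1) / 2) - (k : ℝ) - (i : ℝ)) *
                  (α + 2 * (-((α - 2 * (m : ℝ) + 1) / 2) - (k : ℝ) - (i : ℝ)) - 1) *
                  (ε ^ 2 + r ^ 2) ^ ((-((α - 2 * (m : ℝ) + 1) / 2) - (k : ℝ) - (i : ℝ)) - 1)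
                - 4 * (-((α - 2 * (m : ℝ) + 1) / 2) - (k : ℝ) - (i : ℝ)) *
                  ((-((α - 2 * (m : ℝ) + 1) / 2) - (k : ℝ) - (i : ℝ)) - 1) * ε ^ 2 *
                  (ε ^ 2 + r ^ 2) ^ ((-((α - 2 * (m : ℝ) + 1) / 2) - (k : ℝ) - (i : ℝ)) - 2)) :=
      lapl_sum_rpow α ε hε.ne' (k + 1)
        (fun i => Ccoef α m k i * (ε ^ 2) ^ i)
        (fun i => -((α - 2 * (m : ℝ) + 1) / 2) - (k : ℝ) - (i : ℝ)) hr.ne'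
    rw [negLaplIter_succ, hlapl, hstep]
    have hLHS : -(∑ i ∈ Finset.range (k + 1),
            (Ccoef α m k i * (ε ^ 2) ^ i) *
              (2 * (-((α - 2 * (m : ℝ) + 1) / 2) - (k : ℝ) - (i : ℝ)) *
                  (α + 2 * (-((α - 2 * (m : ℝ) + 1) / 2) - (k : ℝ) - (i : ℝ)) - 1) *
                  (ε ^ 2 + r ^ 2) ^ ((-((α - 2 * (m : ℝ) + 1) / 2) - (k : ℝ) - (i : ℝ)) - 1)
                - 4 * (-((α - 2 * (m : ℝ) + 1) / 2) - (k : ℝ) - (i : ℝ)) *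
                  ((-((α - 2 * (m : ℝ) + 1) / 2) - (k : ℝ) - (i : ℝ)) - 1) * ε ^ 2 *
                  (ε ^ 2 + r ^ 2) ^ ((-((α - 2 * (m : ℝ) + 1) / 2) - (k : ℝ) - (i : ℝ)) - 2)))
        = ∑ i ∈ Finset.range (k + 1), (uterm α m ε r k i + vterm α m ε r k i) := by
      rw [← Finset.sum_neg_distrib]
      exact Finset.sum_congr rfl fun i _ => body_split α m ε r k i
    rw [hLHS, Finset.sum_add_distrib]
    have hRHS : ∑ i ∈ Finset.range (k + 1 + 1),
          Ccoef α m (k + 1) i * (ε ^ 2) ^ i *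
            (ε ^ 2 + r ^ 2) ^ (-((α - 2 * (m : ℝ) + 1) / 2) - ((k + 1 : ℕ) : ℝ) - (i : ℝ))
        = (∑ i ∈ Finset.range (k + 1), (uterm α m ε r k (i + 1) + vterm α m ε r k i))
          + uterm α m ε r k 0 := by
      rw [Finset.sum_range_succ']
      congr 1
      · refine Finset.sum_congr rfl fun i _ => ?_
        have he : (-((α - 2 * (m : ℝ) + 1) / 2) - ((k + 1 : ℕ) : ℝ) - (((i + 1 : ℕ)) : ℝ))
            = -((α - 2 * (m : ℝ) + 1) / 2) - ((k : ℝ) + 1) - ((i : ℝ) + 1) := by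
          push_cast; ring
        rw [he]
        exact G_succ_eq α m ε r k i
      · have he : (-((α - 2 * (m : ℝ) + 1) / 2) - ((k + 1 : ℕ) : ℝ) - (((0 : ℕ)) : ℝ))
            = -((α - 2 * (m : ℝ) + 1) / 2) - ((k : ℝ) + 1) - ((0 : ℕ) : ℝ) := by
          push_cast; ring
        rw [he]
        exact G_zero_eq α m ε r k
    rw [hRHS, Finset.sum_add_distrib]
    have e1 := Finset.sum_range_succ' (fun i => uterm α m ε r k i) (k + 1)
    have e2 := Finset.sum_range_succ (fun i => uterm α m ε r k i) (k + 1)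
    have e3 := uterm_top α m ε r k
    linarith [e1, e2, e3]

theorem stmt_4 (m : ℕ) (hm : 1 ≤ m) (α : ℝ) (hα : -1 < α) (hS : α - 2 * m + 1 > 0)
    (P : ℝ) (hP : P = ∏ h ∈ Finset.range (2 * m), (α + 1 + 2 * ((h : ℝ) - m))) :
    ∀ ε : ℝ, 0 < ε →
      ∀ r : ℝ, 0 < r →
        negLaplIter α m
            (fun r : ℝ => P ^ ((α - 2 * m + 1) / (4 * m)) * (ε / (ε ^ 2 + r ^ 2)) ^ ((α - 2 * m + 1) / 2)) r =
          (P ^ ((α - 2 * m + 1) / (4 * m)) * (ε / (ε ^ 2 + r ^ 2)) ^ ((α - 2 * m + 1) / 2)) ^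
            ((α + 2 * m + 1) / (α - 2 * m + 1)) := by
  intro ε hε r hr
  have hmpos : (0 : ℝ) < m := by exact_mod_cast Nat.lt_of_lt_of_le Nat.zero_lt_one hm
  have hγ : (0 : ℝ) < α - 2 * m + 1 := hS
  have hPpos : 0 < P := by
    rw [hP]
    refine Finset.prod_pos fun h _ => ?_
    have hh : (0 : ℝ) ≤ (h : ℝ) := Nat.cast_nonneg h
    linarith
  have hg : (0 : ℝ) < ε ^ 2 + r ^ 2 := by positivity
  have hfun : (fun r : ℝ => P ^ ((α - 2 * m + 1) / (4 * m)) *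
        (ε / (ε ^ 2 + r ^ 2)) ^ ((α - 2 * m + 1) / 2))
      = fun x : ℝ => (P ^ ((α - 2 * m + 1) / (4 * m)) * ε ^ ((α - 2 * m + 1) / 2)) *
        (ε ^ 2 + x ^ 2) ^ (-((α - 2 * (m : ℝ) + 1) / 2)) := by
    funext x
    have hgx : (0 : ℝ) < ε ^ 2 + x ^ 2 := by positivity
    rw [Real.div_rpow hε.le hgx.le, Real.rpow_neg hgx.le]
    ring
  rw [hfun]
  rw [show negLaplIter α m
        (fun x : ℝ => (P ^ ((α - 2 * m + 1) / (4 * m)) * ε ^ ((α - 2 * m + 1) / 2)) *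
          (ε ^ 2 + x ^ 2) ^ (-((α - 2 * (m : ℝ) + 1) / 2))) r
      = (P ^ ((α - 2 * m + 1) / (4 * m)) * ε ^ ((α - 2 * m + 1) / 2)) *
          negLaplIter α m (fun x : ℝ => (ε ^ 2 + x ^ 2) ^ (-((α - 2 * (m : ℝ) + 1) / 2))) r from
    congrFun (negLaplIter_const_mul α _ _ m) r]
  rw [main_sum α m ε hε m r hr]
  have hcol : ∑ i ∈ Finset.range (m + 1),
        Ccoef α m m i * (ε ^ 2) ^ i *
          (ε ^ 2 + r ^ 2) ^ (-((α - 2 * (m : ℝ) + 1) / 2) - (m : ℝ) - (i : ℝ))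
      = Qcoef α m (m + m) * (ε ^ 2) ^ m *
          (ε ^ 2 + r ^ 2) ^ (-((α - 2 * (m : ℝ) + 1) / 2) - (m : ℝ) - (m : ℝ)) := by
    rw [Finset.sum_range_succ]
    rw [Finset.sum_eq_zero (fun i hi => by
      rw [Ccoef_top_vanish α m (Finset.mem_range.mp hi)]; ring), zero_add, Ccoef_diag]
  rw [hcol]
  have hQ : Qcoef α m (m + m) = P := by
    rw [hP]
    unfold Qcoef
    rw [two_mul]
  rw [hQ]
  -- now expand the RHS
  rw [Real.mul_rpow (Real.rpow_nonneg hPpos.le _)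
    (by positivity : (0:ℝ) ≤ (ε / (ε ^ 2 + r ^ 2)) ^ ((α - 2 * (m:ℝ) + 1) / 2))]
  rw [← Real.rpow_mul hPpos.le]
  rw [show (α - 2 * (m:ℝ) + 1) / (4 * m) * ((α + 2 * m + 1) / (α - 2 * m + 1))
      = (α - 2 * (m:ℝ) + 1) / (4 * m) + 1 by field_simp; ring]
  rw [Real.rpow_add hPpos, Real.rpow_one]
  rw [← Real.rpow_mul (by positivity : (0:ℝ) ≤ ε / (ε ^ 2 + r ^ 2))]
  rw [show (α - 2 * (m:ℝ) + 1) / 2 * ((α + 2 * m + 1) / (α - 2 * m + 1))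
      = (α - 2 * (m:ℝ) + 1) / 2 + 2 * m by field_simp; ring]
  rw [Real.rpow_add (by positivity : (0:ℝ) < ε / (ε ^ 2 + r ^ 2))]
  rw [Real.div_rpow hε.le hg.le, Real.div_rpow hε.le hg.le]
  have hε2m : ε ^ (2 * (m : ℝ)) = (ε ^ 2) ^ m := by
    rw [show (2 * (m : ℝ)) = ((2 * m : ℕ) : ℝ) by push_cast; ring, Real.rpow_natCast, pow_mul]
  rw [hε2m]
  have hsplit : (ε ^ 2 + r ^ 2) ^ (-((α - 2 * (m : ℝ) + 1) / 2) - (m : ℝ) - (m : ℝ))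
      = ((ε ^ 2 + r ^ 2) ^ ((α - 2 * (m : ℝ) + 1) / 2))⁻¹ *
        ((ε ^ 2 + r ^ 2) ^ (2 * (m : ℝ)))⁻¹ := by
    rw [show -((α - 2 * (m : ℝ) + 1) / 2) - (m : ℝ) - (m : ℝ)
        = -((α - 2 * (m : ℝ) + 1) / 2) + -(2 * (m : ℝ)) by ring,
      Real.rpow_add hg, Real.rpow_neg hg.le, Real.rpow_neg hg.le]
  rw [hsplit]
  field_simp
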